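/- For an acyclic solos term P (satisfying conditions AC1–AC3) that reduces to Q by interaction of solos s₀ and t₀, no R-occurrence of a name surviving in Q was substituted during the reduction: if a name x occurring as object in s₀ or t₀ has its R-occurrence in a solo t of P distinct from s₀ and t₀, a contradiction follows. -/
import Mathlib


/-- Communication protocols carried by object occurrences: Send and Receive. -/
inductive Proto : Type
  | S : Proto
  | R : Proto
deriving DecidableEq

/-- A (protocol-decorated) triadic solo: a polarity (`inp = true` for input),
a subject name and three object names each decorated with a protocol. -/
structure Solo where
  inp : Bool
  subj : ℕ
  objs : Fin 3 → ℕ × Proto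
deriving DecidableEq

/-- A solos term in canonical form: a finite set of restricted (bound) names
together with a multiset of solos in parallel. -/
structure CTerm where
  bound : Finset ℕ
  solos : Multiset Solo

/-- `x` has an object occurrence in `s`. -/
def Solo.objOcc (s : Solo) (x : ℕ) : Prop := ∃ i, (s.objs i).1 = x

/-- `x` has an `R`-occurrence in `s` (written `s ◁ x`). -/
def Solo.hasR (s : Solo) (x : ℕ) : Prop := ∃ i, s.objs i = (x, Proto.R)

/-- `x` has an `S`-occurrence in `s`. -/
def Solo.hasS (s : Solo) (x : ℕ) : Prop := ∃ i, s.objs i = (x, Proto.S)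

/-- `s ◁ t` : the subject of `t` has an `R`-occurrence in `s`. -/
def Solo.ltS (s t : Solo) : Prop := s.hasR t.subj

/-- Dual solos: same subject, opposite polarities. -/
def Dual (s t : Solo) : Prop := s.subj = t.subj ∧ s.inp ≠ t.inp

/-- `s` is a root of `P`: no solo `t` of `P` satisfies `t ◁ s`. -/
def CTerm.IsRoot (P : CTerm) (s : Solo) : Prop := ∀ t ∈ P.solos, ¬ t.ltS s

/-- The relation `◁` restricted to the solos of `P`. -/
def CTerm.lt (P : CTerm) (s t : Solo) : Prop :=
  s ∈ P.solos ∧ t ∈ P.solos ∧ s.ltS t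

/-- The number of `R`-occurrences of the name `x` in `P`. -/
def CTerm.Rocc (P : CTerm) (x : ℕ) : ℕ :=
  (P.solos.map
    (fun s => (Finset.univ.filter (fun i => s.objs i = (x, Proto.R))).card)).sum

/-- (AC1): each name has at most one `R`-occurrence. -/
def AC1 (P : CTerm) : Prop := ∀ x : ℕ, P.Rocc x ≤ 1

/-- (AC2): two dual solos are both roots. -/
def AC2 (P : CTerm) : Prop :=
  ∀ s ∈ P.solos, ∀ t ∈ P.solos, Dual s t → P.IsRoot s ∧ P.IsRoot t

/-- (AC3): `s ◁ x` and `x` occurring as object in `t` implies `s ◁* t`. -/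
def AC3 (P : CTerm) : Prop :=
  ∀ s ∈ P.solos, ∀ t ∈ P.solos, ∀ x : ℕ,
    s.hasR x → t.objOcc x → Relation.ReflTransGen P.lt s t

/-- (AC4): a solo with both an `S`- and an `R`-occurrence of a name is an input. -/
def AC4 (P : CTerm) : Prop :=
  ∀ s ∈ P.solos, ∀ x : ℕ, s.hasS x → s.hasR x → s.inp = true

/-- (AC5): no free name has an `R`-occurrence. -/
def AC5 (P : CTerm) : Prop :=
  ∀ x : ℕ, x ∉ P.bound → ∀ s ∈ P.solos, ¬ s.hasR x

/-- Acyclic solos terms: conditions (AC1)–(AC5). -/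
def Acyclic (P : CTerm) : Prop := AC1 P ∧ AC2 P ∧ AC3 P ∧ AC4 P ∧ AC5 P

/-- Applying a name substitution to a solo (protocols are preserved). -/
def applySub (σ : ℕ → ℕ) (s : Solo) : Solo :=
  ⟨s.inp, σ s.subj, fun i => (σ (s.objs i).1, (s.objs i).2)⟩

/-- `MguData σ s0 t0 P` : `σ` is a most general unifier of the objects of the
dual solos `s0` and `t0`, modifying only bound names of `P`. -/
def MguData (σ : ℕ → ℕ) (s0 t0 : Solo) (P : CTerm) : Prop :=
  (∀ i, σ (s0.objs i).1 = σ (t0.objs i).1) ∧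
  (∀ w, σ w ≠ w → w ∈ P.bound) ∧
  (∀ w, σ (σ w) = σ w) ∧
  (∀ τ : ℕ → ℕ, (∀ i, τ (s0.objs i).1 = τ (t0.objs i).1) → ∀ w, τ (σ w) = τ w)

/-- One reduction step of the solos calculus in canonical form: two dual solos
`s0` and `t0` of `P` are erased and a most general unifier of their objects,
modifying only bound names, is applied to the remaining solos (the residues). -/
def Reduces (P Q : CTerm) : Prop :=
  ∃ (s0 t0 : Solo) (σ : ℕ → ℕ),
    s0 ∈ P.solos ∧ t0 ∈ P.solos.erase s0 ∧ Dual s0 t0 ∧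
    MguData σ s0 t0 P ∧
    Q.solos = ((P.solos.erase s0).erase t0).map (applySub σ) ∧
    Q.bound = P.bound.filter (fun w => σ w = w)

/-- Under (AC1)–(AC3), no surviving `R`-occurrence is substituted
during a reduction: if the name `x` takes part in the unification between the
dual solos `s0` and `t0` (i.e. occurs as object in `s0` or `t0`) and has its
`R`-occurrence in a solo `t` of `P` distinct from `s0` and `t0`, we get a
contradiction. -/
theorem stmt10 (P Q : CTerm) (h1 : AC1 P) (h2 : AC2 P) (h3 : AC3 P)
    (s0 t0 : Solo) (σ : ℕ → ℕ)
    (hs0 : s0 ∈ P.solos) (ht0 : t0 ∈ P.solos.erase s0) (hdual : Dual s0 t0)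
    (hmgu : MguData σ s0 t0 P)
    (hQ : Q.solos = ((P.solos.erase s0).erase t0).map (applySub σ))
    (hQb : Q.bound = P.bound.filter (fun w => σ w = w))
    (x : ℕ) (hx : s0.objOcc x ∨ t0.objOcc x)
    (t : Solo) (ht : t ∈ (P.solos.erase s0).erase t0) (htR : t.hasR x) :
    False := by
  classical
  have ht0' : t0 ∈ P.solos := Multiset.mem_of_mem_erase ht0
  have htP : t ∈ P.solos := Multiset.mem_of_mem_erase (Multiset.mem_of_mem_erase ht)
  set M := (P.solos.erase s0).erase t0 with hM
  have hdecomp : P.solos = s0 ::ₘ t0 ::ₘ M := by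
    rw [hM, Multiset.cons_erase ht0, Multiset.cons_erase hs0]
  set f : Solo → ℕ :=
    fun s => (Finset.univ.filter (fun i => s.objs i = (x, Proto.R))).card with hfdef
  have hf : ∀ s : Solo, s.hasR x → 1 ≤ f s := by
    rintro s ⟨i, hi⟩
    exact Finset.card_pos.mpr ⟨i, Finset.mem_filter.mpr ⟨Finset.mem_univ i, hi⟩⟩
  have hRocc : P.Rocc x = f s0 + (f t0 + (M.map f).sum) := by
    rw [CTerm.Rocc, hdecomp, Multiset.map_cons, Multiset.map_cons,
      Multiset.sum_cons, Multiset.sum_cons]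
  have hMf : f t ≤ (M.map f).sum :=
    Multiset.single_le_sum (fun y _ => Nat.zero_le y) _ (Multiset.mem_map_of_mem f ht)
  have hAC1 := h1 x
  have hft : 1 ≤ f t := hf t htR
  by_cases hts0 : t = s0
  · have h1' : 1 ≤ f s0 := hf s0 (hts0 ▸ htR)
    omega
  by_cases htt0 : t = t0
  · have h1' : 1 ≤ f t0 := hf t0 (htt0 ▸ htR)
    omega
  have hroots := h2 s0 hs0 t0 ht0' hdual
  rcases hx with ⟨i, hi⟩ | ⟨i, hi⟩
  · have hch := h3 t htP s0 hs0 x htR ⟨i, hi⟩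
    rcases Relation.ReflTransGen.cases_tail hch with heq | ⟨u, _, hu⟩
    · exact hts0 heq.symm
    · exact hroots.1 u hu.1 hu.2.2
  · have hch := h3 t htP t0 ht0' x htR ⟨i, hi⟩
    rcases Relation.ReflTransGen.cases_tail hch with heq | ⟨u, _, hu⟩
    · exact htt0 heq.symm
    · exact hroots.2 u hu.1 hu.2.2
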